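/- (Lemma 4) Let s ≥ 1 be an integer and let x ∈ ℝ with 0 < x < 1. Then s · C(2s, s) · Σ_{m=0}^{∞} C(m+2s, 2s) · (2m+2s+1) x^{m+s} / ((m+s)(m+s+1)) = (Σ_{k=0}^{s} (−1)^k C(2s+1, s+k+1) x^{s+k}) / (1 − x)^{2s}, the series on the left converging. -/

import Mathlib

/-!
Since `(1 - x)^(-2s) = Σ_j C(j+2s-1, 2s-1) x^j`, the right-hand side is a power series whose
coefficient of `x^(m+s)` is the alternating sum `Σ_{k ≤ s} (-1)^k C(2s+1, s+k+1) C(m+2s-1-k, 2s-1)`.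
This sum has a closed form by Gosper's telescoping: after multiplication by
`2s(2s+1)(m+s)(m+s+1)`, its `k`-th term is `F(k+1) - F(k)` for a hypergeometric `F` that
vanishes at `k = s+1`, and `-F(0)` is `2s(2s+1)(m+s)(m+s+1)` times the coefficient on the left.
-/

open Finset

section BinomialRatios

variable {R : Type*} [CommRing R]

lemma cast_choose_succ_right_mul {n k : ℕ} (hk : k ≤ n) :
    ((k : R) + 1) * (n.choose (k + 1) : R) = ((n : R) - k) * (n.choose k : R) := by
  have h := congrArg (Nat.cast : ℕ → R) (Nat.choose_succ_right_eq n k)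
  push_cast [Nat.cast_sub hk] at h
  linear_combination h

lemma cast_succ_mul_choose (n k : ℕ) :
    ((n : R) + 1) * (n.choose k : R) = ((n : R) + 1 - k) * ((n + 1).choose k : R) := by
  rcases le_or_gt k (n + 1) with hk | hk
  · have h := congrArg (Nat.cast : ℕ → R) (Nat.choose_mul_succ_eq n k)
    push_cast [Nat.cast_sub hk] at h
    linear_combination h
  · rw [Nat.choose_eq_zero_of_lt (by omega), Nat.choose_eq_zero_of_lt hk]
    simp

end BinomialRatios

section Telescoping

variable (s m k : ℕ)

noncomputable def altTerm : ℝ :=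
  (-1) ^ k * ((2 * s + 1).choose (s + k + 1) : ℝ) * ((m + 2 * s - 1 - k).choose (2 * s - 1) : ℝ)

-- The antidifference `F` produced by Gosper's algorithm for `∑ k, altTerm s m k`.
noncomputable def gosperCert : ℝ :=
  -(((s : ℝ) + k + 1) * ((m : ℝ) + 2 * s - k) * ((s : ℝ) * (2 * ((m : ℝ) + s) + 1) + k)) *
    altTerm s m k

lemma mul_altTerm_eq_sub (hs : 1 ≤ s) (hk : k ≤ s) :
    2 * (s : ℝ) * (2 * s + 1) * (m + s) * (m + s + 1) * altTerm s m k =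
      gosperCert s m (k + 1) - gosperCert s m k := by
  have upper : ((s : ℝ) + k + 2) * ((2 * s + 1).choose (s + k + 2) : ℝ) =
      ((s : ℝ) - k) * ((2 * s + 1).choose (s + k + 1) : ℝ) := by
    have h := cast_choose_succ_right_mul (R := ℝ) (n := 2 * s + 1) (k := s + k + 1) (by omega)
    push_cast at h
    linear_combination h
  have lower : ((m : ℝ) + 2 * s - 1 - k) * ((m + 2 * s - 2 - k).choose (2 * s - 1) : ℝ) =
      ((m : ℝ) - k) * ((m + 2 * s - 1 - k).choose (2 * s - 1) : ℝ) := by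
    rcases le_or_gt k m with hkm | hmk
    · have h := cast_succ_mul_choose (R := ℝ) (m + 2 * s - 2 - k) (2 * s - 1)
      rw [show m + 2 * s - 2 - k + 1 = m + 2 * s - 1 - k by omega] at h
      push_cast [Nat.cast_sub (show k ≤ m + 2 * s - 2 by omega),
        Nat.cast_sub (show 2 ≤ m + 2 * s by omega), Nat.cast_sub (show 1 ≤ 2 * s by omega)] at h
      linear_combination h
    · rw [Nat.choose_eq_zero_of_lt (show m + 2 * s - 1 - k < 2 * s - 1 by omega),
        Nat.choose_eq_zero_of_lt (show m + 2 * s - 2 - k < 2 * s - 1 by omega)]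
      simp
  simp only [gosperCert, altTerm]
  rw [show s + (k + 1) + 1 = s + k + 2 by omega,
    show m + 2 * s - 1 - (k + 1) = m + 2 * s - 2 - k by omega]
  push_cast
  linear_combination
    ((-1 : ℝ) ^ k * ((s : ℝ) * (2 * ((m : ℝ) + s) + 1) + k + 1)) *
        (-(((m : ℝ) + 2 * s - 1 - k) * ((m + 2 * s - 2 - k).choose (2 * s - 1) : ℝ))) * upper +
      ((-1 : ℝ) ^ k * ((s : ℝ) * (2 * ((m : ℝ) + s) + 1) + k + 1)) *
        (-(((s : ℝ) - k) * ((2 * s + 1).choose (s + k + 1) : ℝ))) * lower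

lemma gosperCert_succ_self : gosperCert s m (s + 1) = 0 := by
  simp [gosperCert, altTerm, Nat.choose_eq_zero_of_lt (show 2 * s + 1 < s + (s + 1) + 1 by omega)]

lemma gosperCert_zero (hs : 1 ≤ s) :
    gosperCert s m 0 = -(2 * (s : ℝ) * (2 * s + 1) * s * ((2 * s).choose s : ℝ) *
      ((m + 2 * s).choose (2 * s) : ℝ) * (2 * m + 2 * s + 1)) := by
  have central : (2 * (s : ℝ) + 1) * ((2 * s).choose s : ℝ) =
      ((s : ℝ) + 1) * ((2 * s + 1).choose (s + 1) : ℝ) := by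
    have h := congrArg (Nat.cast : ℕ → ℝ) (Nat.add_one_mul_choose_eq (2 * s) s)
    push_cast at h
    linear_combination h
  have shifted : ((m : ℝ) + 2 * s) * ((m + 2 * s - 1).choose (2 * s - 1) : ℝ) =
      2 * (s : ℝ) * ((m + 2 * s).choose (2 * s) : ℝ) := by
    have h := congrArg (Nat.cast : ℕ → ℝ)
      (Nat.add_one_mul_choose_eq (m + 2 * s - 1) (2 * s - 1))
    rw [show m + 2 * s - 1 + 1 = m + 2 * s by omega, show 2 * s - 1 + 1 = 2 * s by omega] at h
    push_cast [Nat.cast_sub (show 1 ≤ m + 2 * s by omega)] at h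
    linear_combination h
  simp only [gosperCert, altTerm, Nat.sub_zero, add_zero, pow_zero, one_mul, Nat.cast_zero]
  linear_combination (s : ℝ) * (2 * m + 2 * s + 1) *
    (((m : ℝ) + 2 * s) * ((m + 2 * s - 1).choose (2 * s - 1) : ℝ) * central -
      (2 * (s : ℝ) + 1) * ((2 * s).choose s : ℝ) * shifted)

lemma sum_altTerm (hs : 1 ≤ s) :
    ∑ k ∈ range (s + 1), altTerm s m k =
      (s : ℝ) * ((2 * s).choose s : ℝ) * (((m + 2 * s).choose (2 * s) : ℝ) *
        (2 * (m : ℝ) + 2 * s + 1) / (((m : ℝ) + s) * ((m : ℝ) + s + 1))) := by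
  have hD : 2 * (s : ℝ) * (2 * s + 1) * (m + s) * (m + s + 1) ≠ 0 := by
    have : (0 : ℝ) < s := by exact_mod_cast hs
    positivity
  apply mul_left_cancel₀ hD
  rw [mul_sum,
    sum_congr rfl fun k hk => mul_altTerm_eq_sub s m k hs (Nat.lt_succ_iff.1 (mem_range.1 hk)),
    sum_range_sub, gosperCert_succ_self, gosperCert_zero s m hs]
  field_simp
  ring

end Telescoping

lemma hasSum_choose_sub_mul_geometric {𝕜 : Type*} [NormedField 𝕜] {n : ℕ} (hn : n ≠ 0) (k : ℕ)
    {r : 𝕜} (hr : ‖r‖ < 1) :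
    HasSum (fun m : ℕ => ((m + n - k).choose n : 𝕜) * r ^ m) (r ^ k / (1 - r) ^ (n + 1)) := by
  have shifted : HasSum ((fun m : ℕ => ((m + n - k).choose n : 𝕜) * r ^ m) ∘ (· + k))
      (r ^ k / (1 - r) ^ (n + 1)) := by
    have h := (hasSum_choose_mul_geometric_of_norm_lt_one n hr).mul_left (r ^ k)
    rw [mul_one_div] at h
    refine h.congr_fun fun j => ?_
    rw [Function.comp_apply, show j + k + n - k = j + n by omega, pow_add]
    ring
  refine (Function.Injective.hasSum_iff (add_left_injective k) fun m hm => ?_).mp shifted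
  have hmk : m < k := by
    by_contra h
    exact hm ⟨m - k, show m - k + k = m by omega⟩
  rw [Nat.choose_eq_zero_of_lt (by omega), Nat.cast_zero, zero_mul]

lemma hasSum_sum_altTerm_mul_pow {s : ℕ} (hs : 1 ≤ s) {x : ℝ} (hx : ‖x‖ < 1) :
    HasSum (fun m : ℕ => (∑ k ∈ range (s + 1), altTerm s m k) * x ^ (m + s))
      ((∑ k ∈ range (s + 1),
          (-1 : ℝ) ^ k * ((2 * s + 1).choose (s + k + 1) : ℝ) * x ^ (s + k)) /
        (1 - x) ^ (2 * s)) := by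
  simp only [sum_mul, sum_div]
  refine hasSum_sum fun k _ => ?_
  have h := (hasSum_choose_sub_mul_geometric (n := 2 * s - 1) (by omega) k hx).mul_left
    ((-1 : ℝ) ^ k * ((2 * s + 1).choose (s + k + 1) : ℝ) * x ^ s)
  rw [show 2 * s - 1 + 1 = 2 * s by omega, ← mul_div_assoc, mul_assoc _ (x ^ s), ← pow_add] at h
  refine h.congr_fun fun m => ?_
  rw [altTerm, show m + (2 * s - 1) - k = m + 2 * s - 1 - k by omega]
  ring

lemma summable_and_mul_tsum_eq_of_hasSum_mul_left {α : Type*} [DivisionRing α]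
    [TopologicalSpace α] [IsTopologicalRing α] [T2Space α] {c a : α} {g : ℕ → α} (hc : c ≠ 0)
    (h : HasSum (fun m => c * g m) a) : Summable g ∧ c * ∑' m, g m = a :=
  ⟨(summable_mul_left_iff hc).1 h.summable, by rw [← tsum_mul_left, h.tsum_eq]⟩

/-- (Lemma 4) For an integer `s ≥ 1` and `0 < x < 1`:
`s C(2s,s) Σ_{m=0}^{∞} C(m+2s, 2s) (2m+2s+1) x^(m+s) / ((m+s)(m+s+1))
  = (Σ_{k=0}^{s} (−1)^k C(2s+1, s+k+1) x^(s+k)) / (1 − x)^(2s)`,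
the series on the left converging. -/
theorem stmt9 (s : ℕ) (hs : 1 ≤ s) (x : ℝ) (hx0 : 0 < x) (hx1 : x < 1) :
    Summable (fun m : ℕ =>
      (Nat.choose (m + 2*s) (2*s) : ℝ) * (2*(m:ℝ) + 2*s + 1) * x ^ (m + s) /
        (((m:ℝ) + s) * ((m:ℝ) + s + 1))) ∧
    (s : ℝ) * (Nat.choose (2*s) s : ℝ) *
        ∑' m : ℕ, (Nat.choose (m + 2*s) (2*s) : ℝ) * (2*(m:ℝ) + 2*s + 1) * x ^ (m + s) /
          (((m:ℝ) + s) * ((m:ℝ) + s + 1)) =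
      (∑ k ∈ Finset.range (s + 1),
          (-1:ℝ)^k * (Nat.choose (2*s+1) (s + k + 1) : ℝ) * x ^ (s + k)) /
        (1 - x) ^ (2*s) := by
  have hx : ‖x‖ < 1 := by rwa [Real.norm_of_nonneg hx0.le]
  have hc : (s : ℝ) * ((2 * s).choose s : ℝ) ≠ 0 := by
    have := Nat.choose_pos (show s ≤ 2 * s by omega)
    have : 0 < s := hs
    positivity
  refine summable_and_mul_tsum_eq_of_hasSum_mul_left hc ?_
  refine (hasSum_sum_altTerm_mul_pow hs hx).congr_fun fun m => ?_
  rw [sum_altTerm _ _ hs]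
  ring
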